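/- arXiv:2203.09078 — 8 statements merged into one kernel-verified Lean document; each statement's English description precedes it below -/
import Mathlib

section
/- If A is a dense subring of B, then the map from Spec B to Spec A sending a prime ideal P of B to P ∩ A is injective. -/
def IsDenseSubring {B : Type*} [CommRing B] (A : Subring B) : Prop :=
  ∀ I : Ideal B, ∀ b ∉ I.radical, ∃ a ∉ I.radical, a * b ∈ A

namespace IsDenseSubring

variable {B : Type*} [CommRing B] {A : Subring B}

theorem exists_mul_mem_of_notMem_prime (hA : IsDenseSubring A) {P : Ideal B} [P.IsPrime]
    {b : B} (hb : b ∉ P) : ∃ a ∉ P, a * b ∈ A := by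
  rw [← ‹P.IsPrime›.radical] at hb ⊢
  exact hA P b hb

theorem le_of_comap_le (hA : IsDenseSubring A) {I Q : Ideal B} [Q.IsPrime]
    (h : I.comap A.subtype ≤ Q.comap A.subtype) : I ≤ Q := by
  intro b hbI
  by_contra hbQ
  obtain ⟨a, haQ, hab⟩ := hA.exists_mul_mem_of_notMem_prime hbQ
  have habQ : a * b ∈ Q := h (show (⟨a * b, hab⟩ : A) ∈ I.comap A.subtype from I.mul_mem_left a hbI)
  exact (‹Q.IsPrime›.mem_or_mem habQ).elim haQ hbQ

end IsDenseSubring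

theorem stmt_5 {B : Type*} [CommRing B] (A : Subring B) (hA : IsDenseSubring A) :
    Function.Injective (fun P : PrimeSpectrum B => PrimeSpectrum.comap A.subtype P) := by
  intro P Q hPQ
  have h : P.asIdeal.comap A.subtype = Q.asIdeal.comap A.subtype :=
    congrArg PrimeSpectrum.asIdeal hPQ
  ext1
  exact le_antisymm (hA.le_of_comap_le h.le) (hA.le_of_comap_le h.ge)
end

section
/- If A is a dense subring of B and P, Q are non-comparable prime ideals of B (neither contains the other), then P ∩ A and Q ∩ A are non-comparable prime ideals of A. -/
namespace IsDenseSubring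

variable {B : Type*} [CommRing B] {A : Subring B}

theorem exists_mul_mem_of_isPrime (hA : IsDenseSubring A) {Q : Ideal B} (hQ : Q.IsPrime)
    {b : B} (hb : b ∉ Q) : ∃ a ∉ Q, a * b ∈ A := by
  rw [← hQ.radical] at hb ⊢
  exact hA Q b hb

theorem comap_subtype_not_le (hA : IsDenseSubring A) {P Q : Ideal B} (hQ : Q.IsPrime)
    (hPQ : ¬ P ≤ Q) : ¬ P.comap A.subtype ≤ Q.comap A.subtype := by
  obtain ⟨b, hbP, hbQ⟩ := Set.not_subset.mp hPQ
  obtain ⟨a, haQ, hab⟩ := hA.exists_mul_mem_of_isPrime hQ hbQ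
  intro hle
  have habQ : a * b ∈ Q := hle (x := ⟨a * b, hab⟩) (P.mul_mem_left a hbP)
  exact (hQ.mem_or_mem habQ).elim haQ hbQ

end IsDenseSubring

theorem stmt_6 {B : Type*} [CommRing B] (A : Subring B) (hA : IsDenseSubring A)
    (P Q : Ideal B) (hP : P.IsPrime) (hQ : Q.IsPrime)
    (h1 : ¬ P ≤ Q) (h2 : ¬ Q ≤ P) :
    ¬ P.comap A.subtype ≤ Q.comap A.subtype ∧ ¬ Q.comap A.subtype ≤ P.comap A.subtype :=
  ⟨hA.comap_subtype_not_le hQ h1, hA.comap_subtype_not_le hP h2⟩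
end

section
/- If A is a dense subring of B and P, Q are prime ideals of B with P ∩ A ⊆ Q ∩ A, then P ⊆ Q. -/
theorem IsDenseSubring.exists_mul_mem_of_notMem_prime_s7 {B : Type*} [CommRing B]
    {A : Subring B} (hA : IsDenseSubring A) {Q : Ideal B} (hQ : Q.IsPrime) {b : B}
    (hb : b ∉ Q) : ∃ a ∉ Q, a * b ∈ A := by
  simpa only [hQ.radical] using hA Q b (by rwa [hQ.radical])

theorem stmt_7_general {B : Type*} [CommRing B] (A : Subring B) (hA : IsDenseSubring A)
    (P Q : Ideal B) (hQ : Q.IsPrime)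
    (h : P.comap A.subtype ≤ Q.comap A.subtype) : P ≤ Q := by
  intro b hbP
  by_contra hbQ
  obtain ⟨a, haQ, habA⟩ := hA.exists_mul_mem_of_notMem_prime_s7 hQ hbQ
  have habQ : a * b ∈ Q := h (show (⟨a * b, habA⟩ : A) ∈ P.comap A.subtype from
    P.mul_mem_left a hbP)
  exact (hQ.mem_or_mem habQ).elim haQ hbQ

theorem stmt_7 {B : Type*} [CommRing B] (A : Subring B) (hA : IsDenseSubring A)
    (P Q : Ideal B) (hP : P.IsPrime) (hQ : Q.IsPrime)
    (h : P.comap A.subtype ≤ Q.comap A.subtype) : P ≤ Q :=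
  stmt_7_general A hA P Q hQ h
end

section
/- If A is a dense subring of B and P is a minimal prime ideal of A, then there exists a unique minimal prime ideal Q of B such that Q ∩ A = P. -/
theorem Ideal.exists_minimalPrimes_comap_eq_of_injective {R S : Type*} [CommRing R] [CommRing S]
    {f : R →+* S} (hf : Function.Injective f) {p : Ideal R} (hp : p ∈ minimalPrimes R) :
    ∃ q ∈ minimalPrimes S, q.comap f = p :=
  Ideal.exists_minimalPrimes_comap_eq f p <| by rwa [Ideal.comap_bot_of_injective f hf]

namespace IsDenseSubring

variable {B : Type*} [CommRing B] {A : Subring B}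

theorem exists_mul_mem_of_notMem (hA : IsDenseSubring A) {Q : Ideal B} [Q.IsPrime] {b : B}
    (hb : b ∉ Q) : ∃ a ∉ Q, a * b ∈ A := by
  simpa only [Ideal.IsPrime.radical ‹_›] using hA Q b (by rwa [Ideal.IsPrime.radical ‹_›])

theorem eq_of_comap_eq (hA : IsDenseSubring A) {Q₁ Q₂ : Ideal B} [Q₁.IsPrime] [Q₂.IsPrime]
    (h : Q₁.comap A.subtype = Q₂.comap A.subtype) : Q₁ = Q₂ :=
  le_antisymm (hA.le_of_comap_le h.le) (hA.le_of_comap_le h.ge)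

end IsDenseSubring

theorem stmt_8 {B : Type*} [CommRing B] (A : Subring B) (hA : IsDenseSubring A)
    (P : Ideal A) (hP : P ∈ minimalPrimes A) :
    ∃! Q : Ideal B, Q ∈ minimalPrimes B ∧ Q.comap A.subtype = P := by
  obtain ⟨Q, hQ, hQP⟩ := Ideal.exists_minimalPrimes_comap_eq_of_injective A.subtype_injective hP
  refine ⟨Q, ⟨hQ, hQP⟩, fun Q' ⟨hQ', hQ'P⟩ => ?_⟩
  have := hQ.isPrime
  have := hQ'.isPrime
  exact hA.eq_of_comap_eq (hQ'P.trans hQP.symm)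
end

section
/- If A is a dense subring of B and Q is a minimal prime ideal of B, then Q ∩ A is a minimal prime ideal of A. -/
lemma aux_min {B : Type*} [CommRing B] {Q : Ideal B} (hQ : Q ∈ minimalPrimes B) {x : B}
    (hx : x ∈ Q) : ∃ s ∉ Q, ∃ n : ℕ, s * x ^ n = 0 := by
  have hP : Q.IsPrime := hQ.1.1
  set L := Localization Q.primeCompl
  have hnu : algebraMap B L x ∈ nonunits L := by
    intro hu
    exact (IsLocalization.AtPrime.isUnit_to_map_iff L Q x).mp hu hx
  have hnil : IsNilpotent (algebraMap B L x) :=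
    by
      haveI := hP
      have h := IsLocalization.AtPrime.radical_map_of_mem_minimalPrimes L Q ⊥ hQ
      rw [Ideal.map_bot] at h
      have hm : algebraMap B L x ∈ (⊥ : Ideal L).radical := h ▸ Ideal.mem_map_of_mem _ hx
      obtain ⟨n, hn⟩ := hm
      exact ⟨n, (Submodule.mem_bot _).mp hn⟩
  obtain ⟨n, hn⟩ := hnil
  rw [← map_pow] at hn
  rw [IsLocalization.map_eq_zero_iff Q.primeCompl] at hn
  obtain ⟨⟨s, hs⟩, hsx⟩ := hn
  exact ⟨s, hs, n, hsx⟩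

theorem stmt_9 {B : Type*} [CommRing B] (A : Subring B) (hA : IsDenseSubring A)
    (Q : Ideal B) (hQ : Q ∈ minimalPrimes B) :
    Q.comap A.subtype ∈ minimalPrimes A := by
  have hP : Q.IsPrime := hQ.1.1
  constructor
  · exact ⟨Ideal.comap_isPrime _ Q, bot_le⟩
  · rintro p ⟨hp, -⟩ hle x hx
    have hxQ : (x : B) ∈ Q := hx
    obtain ⟨s, hs, n, hsx⟩ := aux_min hQ hxQ
    have hs' : s ∉ Q.radical := by rwa [hP.radical]
    obtain ⟨a, ha, has⟩ := hA Q s hs'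
    rw [hP.radical] at ha
    set t : A := ⟨a * s, has⟩ with ht_def
    have ht : t ∉ p := by
      intro h
      have htQ : (t : B) ∈ Q := hle h
      exact (hP.mem_or_mem htQ).elim ha hs
    have hzero : t * x ^ n = 0 := by
      apply Subtype.ext
      push_cast
      calc a * s * (x : B) ^ n = a * (s * (x : B) ^ n) := by ring
        _ = 0 := by rw [hsx, mul_zero]
    have : t * x ^ n ∈ p := hzero ▸ p.zero_mem
    rcases hp.mem_or_mem this with h | h
    · exact absurd h ht
    · exact hp.mem_of_pow_mem n h
end

section
/- Let A be a dense subring of B, where B is a pm-ring (every prime ideal of B is contained in a unique maximal ideal). Then for any two distinct maximal ideals M and M' of B, the intersection (M ∩ A) ∩ (M' ∩ A) contains no prime ideal of A. -/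
namespace Ideal

variable {R : Type*} [CommRing R]

theorem exists_mul_eq_zero_of_forall_isPrime_not_le {p q : Ideal R} [p.IsPrime] [q.IsPrime]
    (h : ∀ Q : Ideal R, Q.IsPrime → Q ≤ p → ¬ Q ≤ q) :
    ∃ b ∉ p, ∃ b' ∉ q, b * b' = 0 := by
  by_contra! hne
  have hdisj : Disjoint ((⊥ : Ideal R) : Set R) (p.primeCompl ⊔ q.primeCompl : Submonoid R) := by
    refine Set.disjoint_left.mpr fun x hx hxS => ?_
    obtain ⟨b, hb, b', hb', rfl⟩ := Submonoid.mem_sup.mp hxS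
    exact hne b hb b' hb' hx
  obtain ⟨Q, hQ, -, hQS⟩ := exists_le_prime_disjoint ⊥ _ hdisj
  have le_of_disjoint {r : Ideal R} [r.IsPrime] (hr : r.primeCompl ≤ p.primeCompl ⊔ q.primeCompl) :
      Q ≤ r := fun x hx => by
    by_contra hxr
    exact Set.disjoint_left.mp hQS hx (hr hxr)
  exact h Q hQ (le_of_disjoint le_sup_left) (le_of_disjoint le_sup_right)

end Ideal

theorem IsDenseSubring.exists_mul_mem_notMem {B : Type*} [CommRing B] {A : Subring B}
    (hA : IsDenseSubring A) {P : Ideal B} (hP : P.IsPrime) {b : B} (hb : b ∉ P) :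
    ∃ a, a * b ∈ A ∧ a * b ∉ P := by
  obtain ⟨a, ha, hab⟩ := hA P b (by rwa [hP.radical])
  rw [hP.radical] at ha
  exact ⟨a, hab, hP.mul_notMem ha hb⟩

theorem stmt_10 {B : Type*} [CommRing B] (A : Subring B) (hA : IsDenseSubring A)
    (hpm : ∀ P : Ideal B, P.IsPrime → ∃! M : Ideal B, M.IsMaximal ∧ P ≤ M)
    (M M' : Ideal B) (hM : M.IsMaximal) (hM' : M'.IsMaximal) (hne : M ≠ M') :
    ¬ ∃ P : Ideal A, P.IsPrime ∧ P ≤ M.comap A.subtype ⊓ M'.comap A.subtype := by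
  rintro ⟨P, hP, hPle⟩
  have no_common_prime (Q : Ideal B) (hQ : Q.IsPrime) (hQM : Q ≤ M) : ¬ Q ≤ M' := fun hQM' =>
    hne ((hpm Q hQ).unique ⟨hM, hQM⟩ ⟨hM', hQM'⟩)
  obtain ⟨b, hb, b', hb', hbb'⟩ := Ideal.exists_mul_eq_zero_of_forall_isPrime_not_le no_common_prime
  obtain ⟨a, hab, habM⟩ := hA.exists_mul_mem_notMem hM.isPrime hb
  obtain ⟨a', hab', hab'M'⟩ := hA.exists_mul_mem_notMem hM'.isPrime hb'
  have hzero : (⟨a * b, hab⟩ : A) * ⟨a' * b', hab'⟩ = 0 := by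
    ext
    calc a * b * (a' * b') = a * a' * (b * b') := by ring
      _ = 0 := by rw [hbb', mul_zero]
  rcases hP.mem_or_mem (hzero ▸ P.zero_mem) with h | h
  · exact habM (hPle h).1
  · exact hab'M' (hPle h).2
end

section
/- If A is a dense subring of B and M is a maximal ideal of B, then there is no prime ideal P of B with M ∩ A strictly contained in P ∩ A. -/
theorem IsDenseSubring.le_of_comap_le_s14 {B : Type*} [CommRing B] {A : Subring B}
    (hA : IsDenseSubring A) {M P : Ideal B} (hP : P.IsPrime)
    (h : M.comap A.subtype ≤ P.comap A.subtype) : M ≤ P := by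
  intro m hm
  by_contra hmP
  obtain ⟨a, haP, ham⟩ := hA P m (by rwa [hP.radical])
  rw [hP.radical] at haP
  -- `a * m` lies in `M ∩ A ⊆ P` although neither factor lies in `P`.
  have hamP : a * m ∈ P :=
    h (show (⟨a * m, ham⟩ : A) ∈ M.comap A.subtype from M.mul_mem_left a hm)
  exact (hP.mem_or_mem hamP).elim haP hmP

theorem stmt_14 {B : Type*} [CommRing B] (A : Subring B) (hA : IsDenseSubring A)
    (M : Ideal B) (hM : M.IsMaximal) :
    ¬ ∃ P : Ideal B, P.IsPrime ∧ M.comap A.subtype < P.comap A.subtype := by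
  rintro ⟨P, hP, hlt⟩
  obtain rfl : M = P := hM.eq_of_le hP.ne_top (hA.le_of_comap_le_s14 hP hlt.le)
  exact lt_irrefl _ hlt
end

section
/- If A is a dense subring of B, then the map Q ↦ Q ∩ A is a homeomorphism from the space of minimal prime ideals of B onto the space of minimal prime ideals of A, both equipped with the subspace Zariski topology. -/
open PrimeSpectrum TopologicalSpace

lemma aux_exists_pow {R : Type*} [CommRing R] {Q : Ideal R} (hQ : Q ∈ minimalPrimes R)
    {x : R} (hx : x ∈ Q) : ∃ s ∉ Q, ∃ n : ℕ, s * x ^ n = 0 := by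
  haveI hQp : Q.IsPrime := hQ.1.1
  have h1 : (algebraMap R (Localization Q.primeCompl)) x ∈ IsLocalRing.maximalIdeal _ := by
    rw [← Localization.AtPrime.map_eq_maximalIdeal]
    exact Ideal.mem_map_of_mem _ hx
  have h2 := IsLocalization.AtPrime.radical_map_of_mem_minimalPrimes
    (A := Localization Q.primeCompl) Q ⊥ hQ
  rw [Ideal.map_bot, Localization.AtPrime.map_eq_maximalIdeal] at h2
  obtain ⟨n, hn⟩ : _ ∈ (⊥ : Ideal (Localization Q.primeCompl)).radical := by rw [h2]; exact h1
  rw [Ideal.mem_bot] at hn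
  rw [← map_pow] at hn
  obtain ⟨s, hs⟩ := (IsLocalization.map_eq_zero_iff Q.primeCompl _ _).mp hn
  exact ⟨s, s.2, n, hs⟩

section Dense
variable {B : Type*} [CommRing B] {A : Subring B}

lemma dense_step (hA : IsDenseSubring A) {Q : Ideal B} (hQ : Q.IsPrime) {s : B} (hs : s ∉ Q) :
    ∃ a ∉ Q, a * s ∈ A := by
  obtain ⟨a, ha, hm⟩ := hA Q s (by rwa [hQ.radical])
  exact ⟨a, by rwa [hQ.radical] at ha, hm⟩

lemma comap_min (hA : IsDenseSubring A) {Q : Ideal B} (hQ : Q ∈ minimalPrimes B) :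
    Q.comap A.subtype ∈ minimalPrimes A := by
  haveI hQp : Q.IsPrime := hQ.1.1
  rw [minimalPrimes_eq_minimals]
  refine ⟨Ideal.IsPrime.comap _, fun P' hP' hle x hx => ?_⟩
  have hxB : (x : B) ∈ Q := hx
  obtain ⟨s, hs, n, hsn⟩ := aux_exists_pow hQ hxB
  obtain ⟨a, ha, hm⟩ := dense_step hA hQp hs
  have has : a * s ∉ Q := fun hc => ((hQp.mem_or_mem hc).elim ha hs)
  have ht : (⟨a * s, hm⟩ : A) ∉ P' := fun hc => has (hle hc)
  have hz : (⟨a * s, hm⟩ : A) * x ^ n = 0 := by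
    apply Subtype.ext
    show (a * s) * (x : B) ^ n = 0
    rw [mul_assoc, hsn, mul_zero]
  have hmem : (⟨a * s, hm⟩ : A) * x ^ n ∈ P' := hz ▸ P'.zero_mem
  exact hP'.mem_of_pow_mem n ((hP'.mem_or_mem hmem).resolve_left ht)

lemma le_aux (hA : IsDenseSubring A) {Q₁ Q₂ : Ideal B} (h₁ : Q₁ ∈ minimalPrimes B)
    (h₂ : Q₂.IsPrime) (h : Q₂.comap A.subtype ≤ Q₁.comap A.subtype) : Q₁ ≤ Q₂ := by
  haveI hQp : Q₁.IsPrime := h₁.1.1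
  intro x hx
  obtain ⟨s, hs, n, hsn⟩ := aux_exists_pow h₁ hx
  obtain ⟨a, ha, hm⟩ := dense_step hA hQp hs
  have has : a * s ∉ Q₁ := fun hc => ((hQp.mem_or_mem hc).elim ha hs)
  have has2 : a * s ∉ Q₂ := fun hc => has (h (by exact hc : (⟨a * s, hm⟩ : A) ∈ Q₂.comap A.subtype))
  have hz : (a * s) * x ^ n ∈ Q₂ := by rw [mul_assoc, hsn, mul_zero]; exact Q₂.zero_mem
  exact h₂.mem_of_pow_mem n ((h₂.mem_or_mem hz).resolve_left has2)

lemma surj_aux {P : Ideal A} (hP : P ∈ minimalPrimes A) :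
    ∃ Q ∈ minimalPrimes B, Q.comap A.subtype = P := by
  have hker : (⊥ : Ideal B).comap A.subtype = ⊥ := by
    rw [← RingHom.ker]
    exact (RingHom.injective_iff_ker_eq_bot _).mp A.subtype_injective
  have hP' : P ∈ ((⊥ : Ideal B).comap A.subtype).minimalPrimes := by rw [hker]; exact hP
  exact Ideal.exists_minimalPrimes_comap_eq _ P hP'

end Dense

theorem stmt_18 {B : Type*} [CommRing B] (A : Subring B) (hA : IsDenseSubring A) :
    ∃ h : {p : PrimeSpectrum B // p.asIdeal ∈ minimalPrimes B} ≃ₜ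
          {q : PrimeSpectrum A // q.asIdeal ∈ minimalPrimes A},
      ∀ p, (h p).1 = PrimeSpectrum.comap A.subtype p.1 := by
  classical
  let F : {p : PrimeSpectrum B // p.asIdeal ∈ minimalPrimes B} →
          {q : PrimeSpectrum A // q.asIdeal ∈ minimalPrimes A} :=
    fun p => ⟨PrimeSpectrum.comap A.subtype p.1, comap_min hA p.2⟩
  have hFinj : Function.Injective F := by
    rintro ⟨p₁, h₁⟩ ⟨p₂, h₂⟩ h
    have hc : p₁.asIdeal.comap A.subtype = p₂.asIdeal.comap A.subtype := by
      have := congrArg (fun q => q.1.asIdeal) h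
      simpa [F, PrimeSpectrum.comap_asIdeal] using this
    have hle : p₁.asIdeal ≤ p₂.asIdeal := le_aux hA h₁ h₂.1.1 hc.ge
    have hle' : p₂.asIdeal ≤ p₁.asIdeal := le_aux hA h₂ h₁.1.1 hc.le
    exact Subtype.ext (PrimeSpectrum.ext (le_antisymm hle hle'))
  have hFsurj : Function.Surjective F := by
    rintro ⟨q, hq⟩
    obtain ⟨Q, hQ, hQc⟩ := surj_aux (B := B) (A := A) hq
    haveI : Q.IsPrime := hQ.1.1
    exact ⟨⟨⟨Q, hQ.1.1⟩, hQ⟩, Subtype.ext (PrimeSpectrum.ext (by simpa [F, PrimeSpectrum.comap_asIdeal] using hQc))⟩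
  let e := Equiv.ofBijective F ⟨hFinj, hFsurj⟩
  have hcont : Continuous e :=
    Continuous.subtype_mk ((PrimeSpectrum.continuous_comap A.subtype).comp continuous_subtype_val) _
  have hind : Topology.IsInducing
      (Subtype.val : {p : PrimeSpectrum B // p.asIdeal ∈ minimalPrimes B} → PrimeSpectrum B) :=
    Topology.IsInducing.subtypeVal
  have hbasis := IsTopologicalBasis.isInducing hind
    (PrimeSpectrum.isTopologicalBasis_basic_opens (R := B))
  have hopen : IsOpenMap e := by
    rw [hbasis.isOpenMap_iff]
    rintro s ⟨_, ⟨b, rfl⟩, rfl⟩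
    have himg : e '' (Subtype.val ⁻¹' ↑(PrimeSpectrum.basicOpen b)) =
        ⋃ (a : B) (h : a * b ∈ A),
          (Subtype.val ⁻¹' ↑(PrimeSpectrum.basicOpen (⟨a * b, h⟩ : A))) := by
      ext q
      simp only [Set.mem_image, Set.mem_preimage, Set.mem_iUnion, SetLike.mem_coe,
        PrimeSpectrum.mem_basicOpen]
      constructor
      · rintro ⟨p, hp, rfl⟩
        haveI : p.1.asIdeal.IsPrime := p.1.2
        obtain ⟨a, ha, hm⟩ := dense_step hA p.1.2 hp
        refine ⟨a, hm, fun hc => ?_⟩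
        have : a * b ∈ p.1.asIdeal := hc
        exact (p.1.2.mem_or_mem this).elim ha hp
      · rintro ⟨a, hm, hab⟩
        refine ⟨e.symm q, fun hb => ?_, e.apply_symm_apply q⟩
        apply hab
        have hq : (e (e.symm q)).1.asIdeal = q.1.asIdeal := by rw [e.apply_symm_apply]
        have : (⟨a * b, hm⟩ : A) ∈ ((e.symm q).1.asIdeal).comap A.subtype := by
          show a * b ∈ (e.symm q).1.asIdeal
          exact Ideal.mul_mem_left _ a hb
        rw [show ((e.symm q).1.asIdeal).comap A.subtype = q.1.asIdeal from hq ▸ rfl] at this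
        exact this
    rw [himg]
    exact isOpen_iUnion fun a => isOpen_iUnion fun h =>
      (PrimeSpectrum.basicOpen _).2.preimage continuous_subtype_val
  exact ⟨e.toHomeomorphOfContinuousOpen hcont hopen, fun p => rfl⟩
end
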